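/- The group PSL(2,8) has order 504 and contains elements x, y, z with x of order 2, y of order 3, z of order 7, xyz = 1, and ⟨x, y⟩ = PSL(2,8). -/

import Mathlib

/-!
Since `-1 = 1` in characteristic `2`, the centre of `SL(2, 𝔽₈)` is trivial and
`PSL(2, 𝔽₈) = SL(2, 𝔽₈)`, a group of order `q (q² - 1) = 504` (compare `|GL(2, q)|` with the
determinant). Realise `𝔽₈` as `𝔽₂[t]/(t³ + t + 1)` and take `x = [[1, 1], [0, 1]]`,
`y = [[0, 1 + t²], [t, 1]]`; then `x`, `y`, `xy` have orders `2`, `3`, `7`. The subgroup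
`H = ⟨x, y⟩` contains `xy` of order `7`, `(xy)²y` of order `9`, and the whole upper unitriangular
group of order `8`, namely the conjugates of `x` under an upper triangular word of order `7`.
Hence `504` divides `|H|` and `H` is everything.
-/

open Matrix MatrixGroups

/-- `a₀ + a₁ t + a₂ t²` in `𝔽₂[t]/(t³ + t + 1)` is `⟨a₀, a₁, a₂⟩`. -/
@[ext]
structure F8 where
  c₀ : ZMod 2
  c₁ : ZMod 2
  c₂ : ZMod 2
deriving DecidableEq, Fintype

namespace F8

instance : Zero F8 := ⟨⟨0, 0, 0⟩⟩
instance : One F8 := ⟨⟨1, 0, 0⟩⟩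
instance : Add F8 := ⟨fun a b => ⟨a.c₀ + b.c₀, a.c₁ + b.c₁, a.c₂ + b.c₂⟩⟩
instance : Neg F8 := ⟨fun a => ⟨-a.c₀, -a.c₁, -a.c₂⟩⟩
instance : Mul F8 :=
  ⟨fun a b => ⟨a.c₀ * b.c₀ + a.c₁ * b.c₂ + a.c₂ * b.c₁,
    a.c₀ * b.c₁ + a.c₁ * b.c₀ + a.c₁ * b.c₂ + a.c₂ * b.c₁ + a.c₂ * b.c₂,
    a.c₀ * b.c₂ + a.c₁ * b.c₁ + a.c₂ * b.c₀ + a.c₂ * b.c₂⟩⟩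

theorem zero_def : (0 : F8) = ⟨0, 0, 0⟩ := rfl
theorem one_def : (1 : F8) = ⟨1, 0, 0⟩ := rfl
theorem neg_def (a : F8) : -a = ⟨-a.c₀, -a.c₁, -a.c₂⟩ := rfl
theorem add_def (a b : F8) : a + b = ⟨a.c₀ + b.c₀, a.c₁ + b.c₁, a.c₂ + b.c₂⟩ := rfl
theorem mul_def (a b : F8) : a * b = ⟨a.c₀ * b.c₀ + a.c₁ * b.c₂ + a.c₂ * b.c₁,
    a.c₀ * b.c₁ + a.c₁ * b.c₀ + a.c₁ * b.c₂ + a.c₂ * b.c₁ + a.c₂ * b.c₂,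
    a.c₀ * b.c₂ + a.c₁ * b.c₁ + a.c₂ * b.c₀ + a.c₂ * b.c₂⟩ := rfl

instance : CommRing F8 where
  add_assoc _ _ _ := by ext <;> simp only [add_def] <;> ring
  zero_add _ := by ext <;> simp only [zero_def, add_def] <;> ring
  add_zero _ := by ext <;> simp only [zero_def, add_def] <;> ring
  add_comm _ _ := by ext <;> simp only [add_def] <;> ring
  neg_add_cancel _ := by ext <;> simp only [zero_def, neg_def, add_def] <;> ring
  mul_assoc _ _ _ := by ext <;> simp only [mul_def] <;> ring
  one_mul _ := by ext <;> simp only [one_def, mul_def] <;> ring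
  mul_one _ := by ext <;> simp only [one_def, mul_def] <;> ring
  zero_mul _ := by ext <;> simp only [zero_def, mul_def] <;> ring
  mul_zero _ := by ext <;> simp only [zero_def, mul_def] <;> ring
  left_distrib _ _ _ := by ext <;> simp only [add_def, mul_def] <;> ring
  right_distrib _ _ _ := by ext <;> simp only [add_def, mul_def] <;> ring
  mul_comm _ _ := by ext <;> simp only [mul_def] <;> ring
  nsmul := nsmulRec
  zsmul := zsmulRec

instance : Field F8 where
  inv a := a ^ 6
  mul_inv_cancel := by decide
  inv_zero := by decide
  exists_pair_ne := ⟨0, 1, by decide⟩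
  nnqsmul := _
  qsmul := _

def t : F8 := ⟨0, 1, 0⟩

end F8

namespace Matrix.SpecialLinearGroup

variable {n R S : Type*} [Fintype n] [DecidableEq n] [CommRing R] [CommRing S]

def mapEquiv (e : R ≃+* S) : SpecialLinearGroup n R ≃* SpecialLinearGroup n S where
  __ := map (e : R →+* S)
  invFun := map (e.symm : S →+* R)
  left_inv A := by ext; simp
  right_inv A := by ext; simp

theorem center_eq_bot_of_card_eq_char_pow {K : Type*} [Field K] (p k : ℕ) [ExpChar K p]
    (hn : Fintype.card n = p ^ k) : Subgroup.center (SpecialLinearGroup n K) = ⊥ := by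
  refine eq_bot_iff.mpr fun A hA => ?_
  obtain ⟨r, hr, hrA⟩ := mem_center_iff.mp hA
  have : (r - 1) ^ p ^ k = 0 := by rw [sub_pow_expChar_pow, ← hn, hr, one_pow, sub_self]
  rw [sub_eq_zero.mp (pow_eq_zero_iff'.mp this).1, map_one] at hrA
  exact Subgroup.mem_bot.mpr (Subtype.ext hrA.symm)

theorem toGL_range_eq_ker_det :
    (toGL : SpecialLinearGroup n R →* GL n R).range = GeneralLinearGroup.det.ker :=
  SetLike.coe_injective <| by rw [MonoidHom.coe_range, range_toGL, MonoidHom.coe_ker]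

theorem natCard_mul_natCard_units [Nonempty n] :
    Nat.card (SpecialLinearGroup n R) * Nat.card Rˣ = Nat.card (GL n R) := by
  rw [Nat.card_congr (MonoidHom.ofInjective toGL_injective).toEquiv, toGL_range_eq_ker_det,
    mul_comm, ← Nat.card_congr (QuotientGroup.quotientKerEquivOfSurjective _
      (GeneralLinearGroup.det_surjective (n := n))).toEquiv,
    ← Subgroup.card_eq_card_quotient_mul_card_subgroup]

theorem natCard_two_field (K : Type*) [Field K] [Fintype K] :
    Nat.card SL(2, K) = Fintype.card K * (Fintype.card K ^ 2 - 1) := by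
  have hq : 0 < Fintype.card K - 1 := by have := Fintype.one_lt_card (α := K); omega
  have h := natCard_mul_natCard_units (n := Fin 2) (R := K)
  rw [card_GL_field, Nat.card_units, Nat.card_eq_fintype_card (α := K), Fin.prod_univ_two] at h
  refine Nat.eq_of_mul_eq_mul_right hq (h.trans ?_)
  simp only [Fin.val_zero, Fin.val_one, pow_zero, pow_one]
  rw [sq, ← Nat.mul_sub_one (Fintype.card K) (Fintype.card K), ← sq]
  ring

variable (R) in
def unipotent : Multiplicative R →* SL(2, R) where
  toFun b := ⟨!![1, b.toAdd; 0, 1], by simp [det_fin_two_of]⟩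
  map_one' := Subtype.ext <| by simp [one_fin_two]
  map_mul' a b := Subtype.ext <| by
    change !![1, a.toAdd + b.toAdd; 0, 1] = !![1, a.toAdd; 0, 1] * !![(1 : R), b.toAdd; 0, 1]
    simp [add_comm]

theorem coe_unipotent (b : Multiplicative R) :
    (unipotent R b : Matrix (Fin 2) (Fin 2) R) = !![1, b.toAdd; 0, 1] :=
  rfl

theorem unipotent_injective : Function.Injective (unipotent R) := fun a b h => by
  simpa [coe_unipotent] using congrArg (fun A : SL(2, R) => A 0 1) h

end Matrix.SpecialLinearGroup

def Matrix.ProjectiveSpecialLinearGroup.equivOfCenterEqBot {n R : Type*} [Fintype n]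
    [DecidableEq n] [CommRing R] (h : Subgroup.center (SpecialLinearGroup n R) = ⊥) :
    ProjectiveSpecialLinearGroup n R ≃* SpecialLinearGroup n R :=
  (QuotientGroup.quotientMulEquivOfEq h).trans QuotientGroup.quotientBot

def IsHurwitzPair {G : Type*} [Group G] (x y : G) : Prop :=
  orderOf x = 2 ∧ orderOf y = 3 ∧ orderOf (x * y) = 7 ∧ Subgroup.closure {x, y} = ⊤

theorem IsHurwitzPair.map {G H : Type*} [Group G] [Group H] {x y : G} (h : IsHurwitzPair x y)
    (e : G ≃* H) : IsHurwitzPair (e x) (e y) := by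
  obtain ⟨hx, hy, hxy, hgen⟩ := h
  refine ⟨by rwa [MulEquiv.orderOf_eq], by rwa [MulEquiv.orderOf_eq],
    by rwa [← map_mul, MulEquiv.orderOf_eq], ?_⟩
  have := congrArg (Subgroup.map e.toMonoidHom) hgen
  rwa [MonoidHom.map_closure, Set.image_pair, Subgroup.map_top_of_surjective _ e.surjective] at this

namespace SL2F8

open F8 Matrix.SpecialLinearGroup

def x : SL(2, F8) := ⟨!![1, 1; 0, 1], by decide⟩
def y : SL(2, F8) := ⟨!![0, 1 + t ^ 2; t, 1], by decide⟩
def w : SL(2, F8) := (y * x) ^ 3 * y ^ 2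

theorem orderOf_x : orderOf x = 2 := orderOf_eq_prime (by decide) (by decide)
theorem orderOf_y : orderOf y = 3 := orderOf_eq_prime (by decide) (by decide)

theorem orderOf_x_mul_y : orderOf (x * y) = 7 :=
  have : Fact (Nat.Prime 7) := ⟨by norm_num⟩
  orderOf_eq_prime (by decide) (by decide)

theorem orderOf_x_mul_y_sq_mul_y : orderOf ((x * y) ^ 2 * y) = 9 :=
  orderOf_eq_prime_pow (p := 3) (n := 1) (by decide) (by decide)

/-- `w` is upper triangular with a diagonal entry `a` of order `7`, so conjugation by `w` maps
`unipotent b` to `unipotent (a² b)`, and the powers of `a²` exhaust `𝔽₈ˣ`. -/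
theorem unipotent_eq_one_or_conj (b : F8) :
    unipotent F8 (.ofAdd b) = 1 ∨
      ∃ k : Fin 7, unipotent F8 (.ofAdd b) = w ^ (k : ℕ) * x * (w ^ (k : ℕ))⁻¹ := by
  revert b
  decide

theorem natCard : Nat.card SL(2, F8) = 504 := by
  rw [natCard_two_field]
  rfl

theorem closure_x_y : Subgroup.closure {x, y} = ⊤ := by
  set H := Subgroup.closure {x, y}
  have hx : x ∈ H := Subgroup.subset_closure (by simp)
  have hy : y ∈ H := Subgroup.subset_closure (by simp)
  have hw : w ∈ H := mul_mem (pow_mem (mul_mem hy hx) 3) (pow_mem hy 2)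
  have hU : (unipotent F8).range ≤ H := by
    rintro _ ⟨b, rfl⟩
    rcases unipotent_eq_one_or_conj b.toAdd with h | ⟨k, h⟩
    · exact h ▸ H.one_mem
    · exact h ▸ mul_mem (mul_mem (pow_mem hw k) hx) (inv_mem (pow_mem hw k))
  have h8 : 8 ∣ Nat.card H := by
    have hU8 : Nat.card (unipotent F8).range = 8 := by
      rw [← Nat.card_congr (MonoidHom.ofInjective unipotent_injective).toEquiv,
        Nat.card_eq_fintype_card]
      rfl
    exact hU8 ▸ Subgroup.card_dvd_of_le hU
  have h7 : 7 ∣ Nat.card H := orderOf_x_mul_y ▸ H.orderOf_dvd_natCard (mul_mem hx hy)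
  have h9 : 9 ∣ Nat.card H := orderOf_x_mul_y_sq_mul_y ▸
    H.orderOf_dvd_natCard (mul_mem (pow_mem (mul_mem hx hy) 2) hy)
  refine H.eq_top_of_card_eq (Nat.dvd_antisymm H.card_subgroup_dvd_card ?_)
  rw [natCard]
  exact Nat.Coprime.mul_dvd_of_dvd_of_dvd (by norm_num)
    (Nat.Coprime.mul_dvd_of_dvd_of_dvd (by norm_num) h8 h9) h7

theorem isHurwitzPair_x_y : IsHurwitzPair x y :=
  ⟨orderOf_x, orderOf_y, orderOf_x_mul_y, closure_x_y⟩

end SL2F8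

/-- `PSL(2, 8)` has order `504` and has a `(2,3,7)`-generating vector: elements `x, y, z`
of orders `2, 3, 7` with `x * y * z = 1` generating the whole group. -/
theorem psl_2_8_hurwitz :
    Nat.card (Matrix.ProjectiveSpecialLinearGroup (Fin 2) (GaloisField 2 3)) = 504 ∧
    ∃ x y z : Matrix.ProjectiveSpecialLinearGroup (Fin 2) (GaloisField 2 3),
      orderOf x = 2 ∧ orderOf y = 3 ∧ orderOf z = 7 ∧ x * y * z = 1 ∧
      Subgroup.closure ({x, y} :
        Set (Matrix.ProjectiveSpecialLinearGroup (Fin 2) (GaloisField 2 3))) = ⊤ := by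
  have : Fintype (GaloisField 2 3) := Fintype.ofFinite _
  have hcard : Fintype.card (GaloisField 2 3) = 8 := by
    rw [← Nat.card_eq_fintype_card, GaloisField.card 2 3 three_ne_zero]
    rfl
  let e := Matrix.ProjectiveSpecialLinearGroup.equivOfCenterEqBot
    (SpecialLinearGroup.center_eq_bot_of_card_eq_char_pow (n := Fin 2) (K := GaloisField 2 3) 2 1 rfl)
  let φ : F8 ≃+* GaloisField 2 3 := FiniteField.ringEquivOfCardEq (hcard ▸ rfl)
  obtain ⟨hx, hy, hxy, hgen⟩ := SL2F8.isHurwitzPair_x_y.map ((SpecialLinearGroup.mapEquiv φ).trans e.symm)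
  refine ⟨?_, _, _, _, hx, hy, (orderOf_inv _).trans hxy, mul_inv_cancel _, hgen⟩
  rw [Nat.card_congr e.toEquiv, SpecialLinearGroup.natCard_two_field, hcard]
  rfl
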